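/- Let φ : S² → S² be a continuous map such that φ(q) ≠ φ(−q) for every q ∈ S². Then φ is homotopic to a continuous map φ₀ : S² → S² which preserves antipodes, i.e. φ₀(−q) = −φ₀(q) for all q ∈ S². -/
import Mathlib

noncomputable def nSph (v : EuclideanSpace ℝ (Fin 3)) (hv : v ≠ 0) :
    Metric.sphere (0 : EuclideanSpace ℝ (Fin 3)) 1 :=
  ⟨‖v‖⁻¹ • v, by
    simp [mem_sphere_iff_norm, norm_smul, abs_of_nonneg (inv_nonneg.2 (norm_nonneg v)),
      inv_mul_cancel₀ (norm_ne_zero_iff.2 hv)]⟩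

lemma nSph_coe (v : EuclideanSpace ℝ (Fin 3)) (hv : v ≠ 0) :
    (nSph v hv : EuclideanSpace ℝ (Fin 3)) = ‖v‖⁻¹ • v := rfl

lemma nSph_of_unit (v : EuclideanSpace ℝ (Fin 3)) (hv : ‖v‖ = 1) (hv' : v ≠ 0) :
    (nSph v hv' : EuclideanSpace ℝ (Fin 3)) = v := by
  simp [nSph_coe, hv]

abbrev S2 := Metric.sphere (0 : EuclideanSpace ℝ (Fin 3)) 1

lemma seg_ne_zero {a u : EuclideanSpace ℝ (Fin 3)} (ha : ‖a‖ = 1) (hu : ‖u‖ = 1)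
    (hne : a + u ≠ 0) {t : ℝ} (ht0 : 0 ≤ t) (ht1 : t ≤ 1) :
    (1 - t) • a + t • u ≠ 0 := by
  intro h
  have h1 : (1 - t) • a = -(t • u) := by
    rw [eq_neg_iff_add_eq_zero]; exact h
  have hn : ‖(1 - t) • a‖ = ‖-(t • u)‖ := by rw [h1]
  rw [norm_neg, norm_smul, norm_smul, ha, hu, Real.norm_eq_abs, Real.norm_eq_abs,
    abs_of_nonneg (by linarith), abs_of_nonneg ht0, mul_one, mul_one] at hn
  have ht : t = 1 / 2 := by linarith
  subst ht
  rw [show (1:ℝ) - 1/2 = 1/2 by norm_num] at h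
  have h3 : (1/2 : ℝ) • (a + u) = 0 := by rw [smul_add]; exact h
  rcases smul_eq_zero.1 h3 with h4 | h4
  · norm_num at h4
  · exact hne h4

/-- If a continuous map `φ : S² → S²` satisfies `φ q ≠ φ (-q)` for every `q`,
then `φ` is homotopic to a continuous map `φ₀` preserving antipodes: `φ₀ (-q) = -(φ₀ q)`. -/
theorem homotopic_to_antipode_preserving
    (φ : C(Metric.sphere (0 : EuclideanSpace ℝ (Fin 3)) 1,
          Metric.sphere (0 : EuclideanSpace ℝ (Fin 3)) 1))
    (hφ : ∀ q : Metric.sphere (0 : EuclideanSpace ℝ (Fin 3)) 1, φ q ≠ φ (-q)) :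
    ∃ φ₀ : C(Metric.sphere (0 : EuclideanSpace ℝ (Fin 3)) 1,
            Metric.sphere (0 : EuclideanSpace ℝ (Fin 3)) 1),
      ContinuousMap.Homotopic φ φ₀ ∧
      ∀ q : Metric.sphere (0 : EuclideanSpace ℝ (Fin 3)) 1, φ₀ (-q) = -(φ₀ q) := by
  -- the difference vector
  set d : S2 → EuclideanSpace ℝ (Fin 3) := fun q => (φ q : EuclideanSpace ℝ (Fin 3)) - (φ (-q) : EuclideanSpace ℝ (Fin 3)) with hd_def
  have hd : ∀ q : S2, d q ≠ 0 := by
    intro q h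
    simp only [hd_def] at h
    exact hφ q (Subtype.ext (sub_eq_zero.1 h))
  have hnormφ : ∀ q : S2, ‖(φ q : EuclideanSpace ℝ (Fin 3))‖ = 1 := fun q =>
    mem_sphere_zero_iff_norm.1 (φ q).2
  have hd_cont : Continuous d := by
    exact (continuous_subtype_val.comp φ.continuous).sub
      (continuous_subtype_val.comp (φ.continuous.comp continuous_neg))
  -- φ₀
  have hcont0 : Continuous fun q : S2 => (nSph (d q) (hd q) : EuclideanSpace ℝ (Fin 3)) := by
    exact ((hd_cont.norm.inv₀ (fun q => norm_ne_zero_iff.2 (hd q))).smul hd_cont)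
  refine ⟨⟨fun q => nSph (d q) (hd q), hcont0.subtype_mk _⟩, ?_, ?_⟩
  · -- homotopy
    have hne : ∀ q : S2, (φ q : EuclideanSpace ℝ (Fin 3)) + (nSph (d q) (hd q) : EuclideanSpace ℝ (Fin 3)) ≠ 0 := by
      intro q h
      set c := ‖d q‖⁻¹ with hc
      have hcpos : 0 < c := inv_pos.2 (norm_pos_iff.2 (hd q))
      have hsum : (φ q : EuclideanSpace ℝ (Fin 3)) + c • d q = 0 := h
      have hexp : (1 + c) • (φ q : EuclideanSpace ℝ (Fin 3)) - c • (φ (-q) : EuclideanSpace ℝ (Fin 3)) = 0 := by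
        simp only [hd_def] at hsum
        have hrw : (1 + c) • (φ q : EuclideanSpace ℝ (Fin 3)) - c • (φ (-q) : EuclideanSpace ℝ (Fin 3))
            = (φ q : EuclideanSpace ℝ (Fin 3)) + c • ((φ q : EuclideanSpace ℝ (Fin 3)) - (φ (-q) : EuclideanSpace ℝ (Fin 3))) := by
          module
        rw [hrw]; exact hsum
      have hnorm : ‖(1 + c) • (φ q : EuclideanSpace ℝ (Fin 3))‖ - ‖c • (φ (-q) : EuclideanSpace ℝ (Fin 3))‖ ≤ 0 := by
        calc ‖(1 + c) • (φ q : EuclideanSpace ℝ (Fin 3))‖ - ‖c • (φ (-q) : EuclideanSpace ℝ (Fin 3))‖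
            ≤ ‖(1 + c) • (φ q : EuclideanSpace ℝ (Fin 3)) - c • (φ (-q) : EuclideanSpace ℝ (Fin 3))‖ :=
              norm_sub_norm_le _ _
          _ = 0 := by rw [hexp, norm_zero]
      rw [norm_smul, norm_smul, hnormφ, hnormφ, Real.norm_eq_abs, Real.norm_eq_abs,
        abs_of_nonneg (by linarith), abs_of_nonneg hcpos.le, mul_one, mul_one] at hnorm
      linarith
    have hseg : ∀ (t : unitInterval) (q : S2),
        (1 - (t : ℝ)) • (φ q : EuclideanSpace ℝ (Fin 3)) + (t : ℝ) • (nSph (d q) (hd q) : EuclideanSpace ℝ (Fin 3)) ≠ 0 := by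
      intro t q
      exact seg_ne_zero (hnormφ q) (mem_sphere_zero_iff_norm.1 (nSph (d q) (hd q)).2)
        (hne q) t.2.1 t.2.2
    refine ⟨⟨⟨fun p => nSph _ (hseg p.1 p.2), ?_⟩, ?_, ?_⟩⟩
    · apply Continuous.subtype_mk
      have hg : Continuous fun p : unitInterval × S2 =>
          (1 - (p.1 : ℝ)) • (φ p.2 : EuclideanSpace ℝ (Fin 3)) + (p.1 : ℝ) • (nSph (d p.2) (hd p.2) : EuclideanSpace ℝ (Fin 3)) := by
        have h1 : Continuous fun p : unitInterval × S2 => ((p.1 : ℝ)) :=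
          continuous_subtype_val.comp continuous_fst
        exact ((continuous_const.sub h1).smul
          ((continuous_subtype_val.comp φ.continuous).comp continuous_snd)).add
          (h1.smul (hcont0.comp continuous_snd))
      exact (hg.norm.inv₀ (fun p => norm_ne_zero_iff.2 (hseg p.1 p.2))).smul hg
    · intro q
      apply Subtype.ext
      simp [nSph_coe, hnormφ q]
    · intro q
      apply Subtype.ext
      have h1 : ‖‖d q‖⁻¹ • d q‖ = 1 := mem_sphere_zero_iff_norm.1 (nSph (d q) (hd q)).2
      simp [nSph_coe, h1]
  · -- antipode preserving
    intro q
    apply Subtype.ext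
    show (nSph (d (-q)) (hd (-q)) : EuclideanSpace ℝ (Fin 3)) = -(nSph (d q) (hd q) : EuclideanSpace ℝ (Fin 3))
    have hdneg : d (-q) = -(d q) := by
      simp [hd_def, neg_neg]
    simp only [nSph_coe]
    rw [hdneg]  -- hope dependent rewrite fine since coe version
    simp [norm_neg]
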